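/- Let $1 < p < \infty$ and $s > 1/2 - 1/(2p)$. Then there exists a constant $C > 0$ such that for all nonnegative functions $b, c : \mathbb{Z} \to [0, \infty)$, $\sum_{n \in \mathbb{Z}} \ \sum_{\substack{(n_1, n_2, n_3) \in \Lambda(n) \\ 4 n_1^2 \le |n_3|, \ 4 n_2^2 \le |n_3|}} \frac{n^2 \, |n_3|}{\left| 3(n_1+n_2)(n_1+n_3)(n_2+n_3) \right|^{3/2} \, \langle n_1 \rangle^{s} \langle n_2 \rangle^{s} \langle n_3 \rangle^{s} \langle n \rangle^{3s}} \, c(n_1) \, b(-n_2) \, b(n_3) \, b(n)^3 \le C \, \| c \|_{\ell^p} \, \| b \|_{\ell^p}^5$. -/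

import Mathlib

/-!
In the region `4 n₁² ≤ |n₃|`, `4 n₂² ≤ |n₃|` the frequency `n₃` dominates: `|n| ≈ |n₃|`,
`|n₁ + n₃| ≈ |n₂ + n₃| ≈ |n₃|` and `⟨n₁⟩ ≤ ⟨n⟩`, so the multiplier is at most a constant times
`|n₁ + n₂|^(-3/2) ⟨n₁⟩^(-2s) ⟨n₃⟩^(-2s)`. Bounding `b(-n₂)` and `b(n)` by `‖b‖_ℓ^∞ ≤ ‖b‖_ℓ^p`,
the sum over `n₂` is a convergent `p`-series, and Hölder's inequality in `n₁` and in `n₃` against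
`⟨·⟩^(-2s)`, which lies in `ℓ^q` for the conjugate exponent `q` exactly when
`s > 1/2 - 1/(2p)`, gives `‖c‖_ℓ^p ‖b‖_ℓ^p`.
-/

open scoped ENNReal NNReal

/-- The Japanese bracket `⟨x⟩ = (1 + |x|²)^(1/2)`. -/
noncomputable def jb (x : ℝ) : ℝ := Real.sqrt (1 + x ^ 2)

theorem ENNReal.le_tsum_rpow_one_div {α : Type*} (f : α → ℝ≥0∞) {p : ℝ} (hp : 0 < p) (a : α) :
    f a ≤ (∑' i, f i ^ p) ^ (1 / p) := by
  calc f a = (f a ^ p) ^ (1 / p) := by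
        rw [← ENNReal.rpow_mul, mul_one_div_cancel hp.ne', ENNReal.rpow_one]
    _ ≤ _ := by gcongr; exact ENNReal.le_tsum a

theorem ENNReal.tsum_mul_le_Lp_mul_Lq {α : Type*} (f g : α → ℝ≥0∞) {p q : ℝ}
    (hpq : p.HolderConjugate q) :
    ∑' a, f a * g a ≤ (∑' a, f a ^ p) ^ (1 / p) * (∑' a, g a ^ q) ^ (1 / q) := by
  let _ : MeasurableSpace α := ⊤
  simpa [MeasureTheory.lintegral_count] using
    ENNReal.lintegral_mul_le_Lp_mul_Lq MeasureTheory.Measure.count hpq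
      (Measurable.of_discrete (f := f)).aemeasurable (Measurable.of_discrete (f := g)).aemeasurable

theorem ENNReal.tsum_comp_add_mul_mul {α : Type*} [AddGroup α] (h f g : α → ℝ≥0∞) :
    ∑' y : α × α × α, h (y.1 + y.2.1) * f y.1 * g y.2.2 =
      (∑' m, h m) * (∑' a, f a) * (∑' c, g c) := by
  have hshift (a : α) : ∑' b, h (a + b) = ∑' m, h m := (Equiv.addLeft a).tsum_eq h
  simp only [ENNReal.tsum_prod', ENNReal.tsum_mul_left, ENNReal.tsum_mul_right, hshift]

theorem ENNReal.tsum_comp_add_mul_mul_le {α : Type*} [AddGroup α] (h f g w : α → ℝ≥0∞)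
    {p q : ℝ} (hpq : p.HolderConjugate q) :
    ∑' y : α × α × α, h (y.1 + y.2.1) * (f y.1 * w y.1) * (g y.2.2 * w y.2.2) ≤
      (∑' m, h m) * ((∑' a, f a ^ p) ^ (1 / p) * (∑' a, w a ^ q) ^ (1 / q)) *
        ((∑' a, g a ^ p) ^ (1 / p) * (∑' a, w a ^ q) ^ (1 / q)) := by
  rw [ENNReal.tsum_comp_add_mul_mul h (fun a ↦ f a * w a) (fun a ↦ g a * w a)]
  gcongr <;> exact ENNReal.tsum_mul_le_Lp_mul_Lq _ _ hpq

lemma injective_snd_of_fst_eq {α β : Type*} {P : α × β → Prop} (f : β → α)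
    (hP : ∀ x, P x → x.1 = f x.2) : Function.Injective fun x : Subtype P ↦ x.1.2 :=
  fun x y (h : x.1.2 = y.1.2) ↦ Subtype.ext (Prod.ext (by rw [hP _ x.2, hP _ y.2, h]) h)

lemma one_lt_two_mul_mul_conjExponent {p s : ℝ} (hp : 1 < p) (hs : 1 / 2 - 1 / (2 * p) < s) :
    1 < 2 * s * p.conjExponent := by
  have hp0 : 0 < p := zero_lt_one.trans hp
  rw [div_sub_div _ _ two_ne_zero (by positivity), div_lt_iff₀ (by positivity)] at hs
  rw [Real.conjExponent, ← mul_div_assoc, one_lt_div (by linarith)]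
  linarith

lemma jb_sq (x : ℝ) : jb x ^ 2 = 1 + x ^ 2 := Real.sq_sqrt (by positivity)

lemma one_le_jb (x : ℝ) : 1 ≤ jb x := Real.one_le_sqrt.2 (by nlinarith [sq_nonneg x])

lemma jb_nonneg (x : ℝ) : 0 ≤ jb x := zero_le_one.trans (one_le_jb x)

lemma abs_le_jb (x : ℝ) : |x| ≤ jb x := Real.abs_le_sqrt (by linarith)

lemma jb_le_mul_jb {a x y : ℝ} (ha : 1 ≤ a) (h : |x| ≤ a * |y|) : jb x ≤ a * jb y := by
  refine Real.sqrt_le_iff.2 ⟨by nlinarith [one_le_jb y], ?_⟩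
  have hx : x ^ 2 ≤ a ^ 2 * y ^ 2 := by
    rw [← sq_abs x, ← sq_abs y, ← mul_pow]
    exact pow_le_pow_left₀ (abs_nonneg x) h 2
  rw [mul_pow, jb_sq]
  nlinarith

lemma one_le_jb_rpow {s : ℝ} (hs : 0 ≤ s) (x : ℝ) : 1 ≤ jb x ^ s :=
  Real.one_le_rpow (one_le_jb x) hs

lemma summable_jb_rpow_neg {r : ℝ} (hr : 1 < r) : Summable fun k : ℤ ↦ jb k ^ (-r) := by
  refine (Real.summable_abs_int_rpow hr).of_norm_bounded_eventually ?_
  filter_upwards [Set.Finite.eventually_cofinite_notMem (Set.finite_singleton (0 : ℤ))] with k hk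
  have hk : (0 : ℝ) < |(k : ℝ)| := by simpa using hk
  rw [Real.norm_of_nonneg (Real.rpow_nonneg (jb_nonneg k) _)]
  exact Real.rpow_le_rpow_of_nonpos hk (abs_le_jb _) (by linarith)

lemma tsum_ofReal_jb_rpow_neg_rpow_ne_top {r q : ℝ} (hq : 0 ≤ q) (hrq : 1 < r * q) :
    ∑' k : ℤ, ENNReal.ofReal (jb k ^ (-r)) ^ q ≠ ∞ := by
  simp_rw [ENNReal.ofReal_rpow_of_nonneg (Real.rpow_nonneg (jb_nonneg _) _) hq,
    ← Real.rpow_mul (jb_nonneg _), neg_mul]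
  exact (summable_jb_rpow_neg hrq).tsum_ofReal_ne_top

lemma sq_mul_abs_div_rpow_three_halves_le {x1 x2 x3 : ℝ} (h12 : x1 + x2 ≠ 0) (h1 : 4 * |x1| ≤ |x3|)
    (h2 : 4 * |x2| ≤ |x3|) :
    (x1 + x2 + x3) ^ 2 * |x3| / |3 * (x1 + x2) * (x1 + x3) * (x2 + x3)| ^ ((3 : ℝ) / 2) ≤
      9 / 4 * |x1 + x2| ^ (-(3 / 2 : ℝ)) := by
  set A := |x1 + x2|
  have hA : 0 < A := abs_pos.2 h12
  have hx3 : 0 < |x3| := by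
    by_contra! h
    exact hA.ne' (le_antisymm (by linarith [abs_add_le x1 x2]) (abs_nonneg _))
  have h13 : 3 / 4 * |x3| ≤ |x1 + x3| := by
    linarith [add_comm x3 x1 ▸ abs_sub_abs_le_abs_add x3 x1]
  have h23 : 3 / 4 * |x3| ≤ |x2 + x3| := by
    linarith [add_comm x3 x2 ▸ abs_sub_abs_le_abs_add x3 x2]
  have hx : |x1 + x2 + x3| ≤ 3 / 2 * |x3| := by linarith [abs_add_three x1 x2 x3]
  have hP : A * |x3| ^ 2 ≤ |3 * (x1 + x2) * (x1 + x3) * (x2 + x3)| := by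
    simp only [abs_mul, abs_of_pos (three_pos : (0 : ℝ) < 3)]
    nlinarith [mul_le_mul h13 h23 (by positivity) (abs_nonneg _)]
  have hcube : (|x3| ^ 2) ^ ((3 : ℝ) / 2) = |x3| ^ 3 := by
    rw [← Real.rpow_natCast, ← Real.rpow_mul (abs_nonneg _), ← Real.rpow_natCast]
    norm_num
  have hPpow : A ^ ((3 : ℝ) / 2) * |x3| ^ 3 ≤
      |3 * (x1 + x2) * (x1 + x3) * (x2 + x3)| ^ ((3 : ℝ) / 2) := by
    rw [← hcube, ← Real.mul_rpow hA.le (by positivity)]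
    exact Real.rpow_le_rpow (by positivity) hP (by norm_num)
  have hnum : (x1 + x2 + x3) ^ 2 * |x3| ≤ 9 / 4 * |x3| ^ 3 := by
    rw [← sq_abs]
    nlinarith [pow_le_pow_left₀ (abs_nonneg _) hx 2]
  rw [div_le_iff₀ ((by positivity : 0 < A ^ ((3 : ℝ) / 2) * |x3| ^ 3).trans_le hPpow),
    Real.rpow_neg hA.le]
  calc (x1 + x2 + x3) ^ 2 * |x3| ≤ 9 / 4 * |x3| ^ 3 := hnum
    _ = 9 / 4 * (A ^ ((3 : ℝ) / 2))⁻¹ * (A ^ ((3 : ℝ) / 2) * |x3| ^ 3) := by field_simp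
    _ ≤ _ := by gcongr

lemma inv_jb_rpow_mul_le {s x x1 x2 x3 : ℝ} (hs : 0 ≤ s) (h1 : |x1| ≤ |x|)
    (h3 : |x3| ≤ 2 * |x|) :
    (jb x1 ^ s * jb x2 ^ s * jb x3 ^ s * jb x ^ (3 * s))⁻¹ ≤
      2 ^ s * (jb x1 ^ (-(2 * s)) * jb x3 ^ (-(2 * s))) := by
  have ha : jb x1 ^ s ≤ jb x ^ s :=
    Real.rpow_le_rpow (jb_nonneg _) (by simpa using jb_le_mul_jb le_rfl (by simpa using h1)) hs
  have hc : jb x3 ^ s ≤ 2 ^ s * jb x ^ s := by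
    rw [← Real.mul_rpow zero_le_two (jb_nonneg _)]
    exact Real.rpow_le_rpow (jb_nonneg _) (jb_le_mul_jb one_le_two h3) hs
  have hb := one_le_jb_rpow hs x2
  have hu := one_le_jb_rpow hs x
  have hpos (y : ℝ) : 0 < jb y ^ s := zero_lt_one.trans_le (one_le_jb_rpow hs y)
  have := hpos x1; have := hpos x2; have := hpos x3; have := hpos x
  have hpow (y : ℝ) (k : ℕ) : jb y ^ (k * s) = (jb y ^ s) ^ k := by
    rw [mul_comm, Real.rpow_mul_natCast (jb_nonneg y)]
  rw [Real.rpow_neg (jb_nonneg _), Real.rpow_neg (jb_nonneg _),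
    show (3 : ℝ) = (3 : ℕ) by norm_num, show (2 : ℝ) * s = (2 : ℕ) * s by norm_num, hpow, hpow,
    hpow, ← mul_inv, ← div_eq_mul_inv, inv_eq_one_div,
    div_le_div_iff₀ (by positivity) (by positivity)]
  calc 1 * ((jb x1 ^ s) ^ 2 * (jb x3 ^ s) ^ 2)
      = (jb x1 ^ s * jb x3 ^ s) * (jb x1 ^ s * jb x3 ^ s) := by ring
    _ ≤ (jb x1 ^ s * jb x3 ^ s) * (jb x ^ s * (2 ^ s * jb x ^ s)) := by gcongr
    _ ≤ (jb x1 ^ s * jb x3 ^ s) * (jb x ^ s * (2 ^ s * jb x ^ s)) * (jb x2 ^ s * jb x ^ s) :=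
        le_mul_of_one_le_right (by positivity) (one_le_mul_of_one_le_of_one_le hb hu)
    _ = 2 ^ s * (jb x1 ^ s * jb x2 ^ s * jb x3 ^ s * (jb x ^ s) ^ 3) := by ring

lemma weight_le {s x1 x2 x3 : ℝ} (hs : 0 ≤ s) (h12 : x1 + x2 ≠ 0) (h1 : 4 * |x1| ≤ |x3|)
    (h2 : 4 * |x2| ≤ |x3|) :
    (x1 + x2 + x3) ^ 2 * |x3| /
        (|3 * (x1 + x2) * (x1 + x3) * (x2 + x3)| ^ ((3 : ℝ) / 2) *
          (jb x1 ^ s * jb x2 ^ s * jb x3 ^ s * jb (x1 + x2 + x3) ^ (3 * s))) ≤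
      9 / 4 * 2 ^ s * (|x1 + x2| ^ (-(3 / 2 : ℝ)) * (jb x1 ^ (-(2 * s)) * jb x3 ^ (-(2 * s)))) := by
  have hx : |x3| ≤ 2 * |x1 + x2 + x3| := by
    linarith [add_comm x3 (x1 + x2) ▸ abs_sub_abs_le_abs_add x3 (x1 + x2), abs_add_le x1 x2]
  rw [← div_div, div_eq_mul_inv]
  calc _ ≤ 9 / 4 * |x1 + x2| ^ (-(3 / 2 : ℝ)) *
        (2 ^ s * (jb x1 ^ (-(2 * s)) * jb x3 ^ (-(2 * s)))) :=
        mul_le_mul (sq_mul_abs_div_rpow_three_halves_le h12 h1 h2)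
          (inv_jb_rpow_mul_le hs (by linarith [abs_nonneg x1]) hx) (by unfold jb; positivity)
          (by positivity)
    _ = _ := by ring

lemma four_mul_abs_le_of_four_mul_sq_le {k m : ℤ} (h : 4 * k ^ 2 ≤ |m|) :
    4 * |(k : ℝ)| ≤ |(m : ℝ)| := by
  have : |k| ≤ k ^ 2 := sq_abs k ▸ Int.le_self_sq |k|
  exact_mod_cast (by linarith : 4 * |k| ≤ |m|)

lemma ofReal_weight_mul_le {s p : ℝ} (hs : 0 ≤ s) (hp : 0 < p) {b c : ℤ → ℝ≥0} {n n1 n2 n3 : ℤ}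
    (hn : n = n1 + n2 + n3) (h12 : n1 + n2 ≠ 0) (h1 : 4 * n1 ^ 2 ≤ |n3|)
    (h2 : 4 * n2 ^ 2 ≤ |n3|) :
    ENNReal.ofReal
        ((n : ℝ) ^ 2 * |(n3 : ℝ)| /
            (|((3 * (n1 + n2) * (n1 + n3) * (n2 + n3) : ℤ) : ℝ)| ^ ((3 : ℝ) / 2) *
              (jb n1 ^ s * jb n2 ^ s * jb n3 ^ s * jb n ^ (3 * s))) *
          (c n1 * b (-n2) * b n3 * b n ^ 3)) ≤
      ENNReal.ofReal (9 / 4 * 2 ^ s) * ((∑' k, ENNReal.ofReal (b k) ^ p) ^ (1 / p)) ^ 4 *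
        (ENNReal.ofReal (|((n1 + n2 : ℤ) : ℝ)| ^ (-(3 / 2 : ℝ))) *
          (ENNReal.ofReal (c n1) * ENNReal.ofReal (jb n1 ^ (-(2 * s)))) *
          (ENNReal.ofReal (b n3) * ENNReal.ofReal (jb n3 ^ (-(2 * s))))) := by
  have hW := weight_le hs (by exact_mod_cast h12) (four_mul_abs_le_of_four_mul_sq_le h1)
    (four_mul_abs_le_of_four_mul_sq_le h2)
  have hB (k : ℤ) := ENNReal.le_tsum_rpow_one_div (fun k ↦ ENNReal.ofReal (b k)) hp k
  have := jb_nonneg n1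
  have := jb_nonneg n3
  subst hn
  push_cast at hW ⊢
  calc _ ≤ ENNReal.ofReal (9 / 4 * 2 ^ s * (|(n1 : ℝ) + n2| ^ (-(3 / 2 : ℝ)) *
          (c n1 * jb n1 ^ (-(2 * s))) * (b n3 * jb n3 ^ (-(2 * s)))) *
          (b (-n2) * b (n1 + n2 + n3) ^ 3)) :=
        ENNReal.ofReal_le_ofReal
          ((mul_le_mul_of_nonneg_right hW (by positivity)).trans_eq (by ring))
    _ = ENNReal.ofReal (9 / 4 * 2 ^ s) * (ENNReal.ofReal (|(n1 : ℝ) + n2| ^ (-(3 / 2 : ℝ))) *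
          (ENNReal.ofReal (c n1) * ENNReal.ofReal (jb n1 ^ (-(2 * s)))) *
          (ENNReal.ofReal (b n3) * ENNReal.ofReal (jb n3 ^ (-(2 * s))))) *
          (ENNReal.ofReal (b (-n2)) * ENNReal.ofReal (b (n1 + n2 + n3)) ^ 3) := by
        simp (disch := positivity) only [ENNReal.ofReal_mul, ENNReal.ofReal_pow]
    _ ≤ _ := by
        grw [hB (-n2), hB (n1 + n2 + n3)]
        exact le_of_eq (by ring)

theorem stmt16 (p s : ℝ) (hp : 1 < p) (hs : 1 / 2 - 1 / (2 * p) < s) :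
    ∃ C : ℝ, 0 < C ∧ ∀ b c : ℤ → ℝ, (∀ n, 0 ≤ b n) → (∀ n, 0 ≤ c n) →
      (∑' x : {q : ℤ × ℤ × ℤ × ℤ //
          q.1 = q.2.1 + q.2.2.1 + q.2.2.2 ∧
          (q.2.1 + q.2.2.1) * (q.2.1 + q.2.2.2) * (q.2.2.1 + q.2.2.2) ≠ 0 ∧
          4 * q.2.1 ^ 2 ≤ |q.2.2.2| ∧ 4 * q.2.2.1 ^ 2 ≤ |q.2.2.2|},
        ENNReal.ofReal
          ((x.1.1 : ℝ) ^ 2 * |(x.1.2.2.2 : ℝ)| /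
              (|((3 * (x.1.2.1 + x.1.2.2.1) * (x.1.2.1 + x.1.2.2.2) *
                  (x.1.2.2.1 + x.1.2.2.2) : ℤ) : ℝ)| ^ ((3 : ℝ) / 2) *
                (jb (x.1.2.1 : ℝ) ^ s * jb (x.1.2.2.1 : ℝ) ^ s * jb (x.1.2.2.2 : ℝ) ^ s *
                  jb (x.1.1 : ℝ) ^ (3 * s))) *
            (c x.1.2.1 * b (-x.1.2.2.1) * b x.1.2.2.2 * b x.1.1 ^ 3))) ≤
        ENNReal.ofReal C * (∑' n : ℤ, ENNReal.ofReal (c n) ^ p) ^ (1 / p) *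
          ((∑' n : ℤ, ENNReal.ofReal (b n) ^ p) ^ (1 / p)) ^ (5 : ℕ) := by
  set q := p.conjExponent
  have hpq : p.HolderConjugate q := .conjExponent hp
  have hsq : 1 < 2 * s * q := one_lt_two_mul_mul_conjExponent hp hs
  have hs0 : 0 ≤ s := by nlinarith [hpq.symm.pos]
  let w : ℤ → ℝ≥0∞ := fun k ↦ ENNReal.ofReal (jb k ^ (-(2 * s)))
  let h : ℤ → ℝ≥0∞ := fun m ↦ ENNReal.ofReal (|(m : ℝ)| ^ (-(3 / 2 : ℝ)))
  set K := (∑' k, w k ^ q) ^ (1 / q)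
  set M := ENNReal.ofReal (9 / 4 * 2 ^ s) * (∑' m, h m) * K ^ 2
  have hM : M ≠ ∞ := by
    have := (Real.summable_abs_int_rpow (by norm_num : (1 : ℝ) < 3 / 2)).tsum_ofReal_ne_top
    have := tsum_ofReal_jb_rpow_neg_rpow_ne_top hpq.symm.nonneg hsq
    have := hpq.symm.nonneg
    finiteness
  refine ⟨M.toReal + 1, by positivity, fun b c hb hc ↦ ?_⟩
  lift b to ℤ → ℝ≥0 using hb
  lift c to ℤ → ℝ≥0 using hc
  let G : ℤ × ℤ × ℤ → ℝ≥0∞ := fun y ↦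
    h (y.1 + y.2.1) * (ENNReal.ofReal (c y.1) * w y.1) * (ENNReal.ofReal (b y.2.2) * w y.2.2)
  refine (ENNReal.tsum_le_tsum fun x ↦ ofReal_weight_mul_le hs0 (zero_lt_one.trans hp) x.2.1
    (left_ne_zero_of_mul (left_ne_zero_of_mul x.2.2.1)) x.2.2.2.1 x.2.2.2.2).trans ?_
  rw [ENNReal.tsum_mul_left]
  refine (mul_le_mul_right ((ENNReal.tsum_comp_le_tsum_of_injective
    (injective_snd_of_fst_eq (fun y : ℤ × ℤ × ℤ ↦ y.1 + y.2.1 + y.2.2) fun _ hx ↦ hx.1) G).trans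
    (ENNReal.tsum_comp_add_mul_mul_le h (fun k ↦ ENNReal.ofReal (c k))
      (fun k ↦ ENNReal.ofReal (b k)) w hpq)) _).trans ?_
  calc _ = M * (∑' n, ENNReal.ofReal (c n) ^ p) ^ (1 / p) *
        ((∑' n, ENNReal.ofReal (b n) ^ p) ^ (1 / p)) ^ 5 := by ring
    _ ≤ _ := by
      gcongr
      exact (ENNReal.le_ofReal_iff_toReal_le hM (by positivity)).2 (by linarith)
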